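/- arXiv:1309.1290 — 2 statements merged into one kernel-verified Lean document; each statement's English description precedes it below -/
import Mathlib

section
/- Let u ∈ Γ* be reduced. Then there exist reduced words p, r, m, s ∈ Γ*, a subset M ⊆ L of pairwise independent nodes (i.e. (α, β) ∈ I for all α ≠ β in M), and letters a_α, b_α ∈ Γ_α for each α ∈ M with b_α a_α ≠ 1 in G_α, such that: u ≡ p r m s p̄; r ≡ ∏_{α∈M} a_α and s ≡ ∏_{α∈M} b_α (in particular |r|_α = |s|_α ≤ 1 for all α ∈ L); the word m c is cyclically reduced, where c is the word consisting of the letters [b_α a_α] ∈ Γ_α for α ∈ M; and u is conjugate in G to the element represented by m c. -/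
/-- The set of commutator relators defining a graph product. -/
def gpRels {L : Type} (I : L → L → Prop) (G : L → Type) [∀ α, Group (G α)] :
    Set (Monoid.CoprodI G) :=
  {x | ∃ (α β : L) (g : G α) (h : G β), I α β ∧
    x = Monoid.CoprodI.of g * Monoid.CoprodI.of h *
        (Monoid.CoprodI.of g)⁻¹ * (Monoid.CoprodI.of h)⁻¹}

/-- The graph product of the groups `G α` over the independence relation `I`. -/
def GP {L : Type} (I : L → L → Prop) (G : L → Type) [∀ α, Group (G α)] : Type :=
  Monoid.CoprodI G ⧸ Subgroup.normalClosure (gpRels I G)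

instance {L : Type} (I : L → L → Prop) (G : L → Type) [∀ α, Group (G α)] :
    Group (GP I G) := QuotientGroup.Quotient.group _

/-- The canonical homomorphism of a node group into the graph product. -/
def gpOf {L : Type} (I : L → L → Prop) (G : L → Type) [∀ α, Group (G α)] (α : L) :
    G α →* GP I G :=
  (QuotientGroup.mk' _).comp Monoid.CoprodI.of

/-- A letter: a nontrivial element of one of the node groups. -/
abbrev Letter (L : Type) (G : L → Type) [∀ α, Group (G α)] : Type :=
  Σ α : L, {g : G α // g ≠ 1}

variable {L : Type} (I : L → L → Prop) (G : L → Type) [∀ α, Group (G α)]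

/-- The element of the graph product represented by a word. -/
def evalWord (w : List (Letter L G)) : GP I G :=
  (w.map fun l => gpOf I G l.1 l.2.1).prod

/-- One elementary commutation step between trace-equivalent words. -/
inductive TraceStep : List (Letter L G) → List (Letter L G) → Prop
  | swap (u v : List (Letter L G)) (a b : Letter L G) (h : I a.1 b.1) :
      TraceStep (u ++ a :: b :: v) (u ++ b :: a :: v)

/-- Trace equivalence: the congruence generated by commuting independent letters. -/
def TraceEquiv : List (Letter L G) → List (Letter L G) → Prop :=
  Relation.EqvGen (TraceStep I G)

/-- `IndepWord I G β u` means every letter of `u` is independent of `β`,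
i.e. `u ∈ I(β)`. -/
def IndepWord (β : L) (u : List (Letter L G)) : Prop := ∀ c ∈ u, I c.1 β

/-- A word is reduced if it contains no factor `b u b'` with `b, b' ∈ Γ_β`
and `u ∈ I(β)`. -/
def Reduced (w : List (Letter L G)) : Prop :=
  ¬ ∃ (β : L) (b b' : {g : G β // g ≠ 1}) (x u y : List (Letter L G)),
      w = x ++ (⟨β, b⟩ : Letter L G) :: (u ++ (⟨β, b'⟩ : Letter L G) :: y) ∧
      IndepWord I G β u

/-- `|w|_α` : number of letters of `w` in `Γ_α`. -/
noncomputable def countAlpha (α : L) (w : List (Letter L G)) : ℕ :=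
  (w.filter fun l => Classical.propDecidable (l.1 = α) |>.decide).length

/-- The alphabet `al(w)` of a word. -/
def alph (w : List (Letter L G)) : Set L := {α | ∃ l ∈ w, l.1 = α}

/-- A reduced word is cyclically reduced if it has no factorization `≡ a v a'`
with `a, a'` letters from the same node group. -/
def IsCyclicallyReduced (w : List (Letter L G)) : Prop :=
  Reduced I G w ∧
  ¬ ∃ (α : L) (a a' : {g : G α // g ≠ 1}) (v : List (Letter L G)),
      TraceEquiv I G w ((⟨α, a⟩ : Letter L G) :: (v ++ [(⟨α, a'⟩ : Letter L G)]))

/-- Words `u` and `v` are transposed if `u ≡ r s` and `v ≡ s r`. -/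
def Transposed (u v : List (Letter L G)) : Prop :=
  ∃ r s : List (Letter L G), TraceEquiv I G u (r ++ s) ∧ TraceEquiv I G v (s ++ r)

/-- `u ≈ v` : the reflexive-transitive closure of transposition. -/
def TransClosure : List (Letter L G) → List (Letter L G) → Prop :=
  Relation.ReflTransGen (Transposed I G)

/-- The formal inverse of a letter. -/
def letterInv (l : Letter L G) : Letter L G :=
  ⟨l.1, ⟨(l.2 : G l.1)⁻¹, inv_ne_one.mpr l.2.2⟩⟩

/-- The formal inverse `p̄` of a word `p`. -/
def wordInv (w : List (Letter L G)) : List (Letter L G) :=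
  (w.map (letterInv G)).reverse

/-- The dependence graph on `L`: distinct nodes are adjacent iff not independent. -/
def depGraph : SimpleGraph L where
  Adj a b := a ≠ b ∧ ¬ I a b ∧ ¬ I b a
  symm := by
    constructor
    intro a b ⟨h1, h2, h3⟩
    exact ⟨h1.symm, h3, h2⟩
  loopless := by constructor; intro a ⟨h1, _⟩; exact h1 rfl

/-- A word is connected if its alphabet induces a connected subgraph of the
dependence graph. -/
def ConnectedWord (w : List (Letter L G)) : Prop :=
  ((depGraph I).induce (alph G w)).Connected

/-- A word `w` is `α`-reduced if every word with fewer letters from `Γ_α`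
represents a different element of the graph product. -/
def AlphaReduced (α : L) (w : List (Letter L G)) : Prop :=
  ∀ w' : List (Letter L G), countAlpha G α w' < countAlpha G α w →
    evalWord I G w' ≠ evalWord I G w


/-!
Call `u ≡ x w x'` with `x, x' ∈ Γ_γ` a pinch of `u`. If `x' x = 1`, then `u` is conjugate to the
shorter word `w` and `x` goes into `p`; so we may assume that no pinch cancels. Such pinches
are then peeled off one after another, each time one whose node is independent of the nodes
`M` peeled so far. All peeled letters commute with each other, so `u ≡ r m s` with
`r ≡ ∏ a_α` and `s ≡ ∏ b_α`, and `u` is conjugate to `m s r = m c` in `G`. When nothing more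
can be peeled, `m` has no pinch independent of `M` and no initial or final letter in `Γ_α`
for `α ∈ M`. As `c` has exactly one letter in each `Γ_α`, `α ∈ M`, a factor `y W y'` or a
pinch of `m c` would produce one of these, so `m c` is cyclically reduced.
-/

section

variable {I G}

theorem List.append_eq_append_cons_append_cons {α : Type*} {m c P Q R : List α} {y y' : α}
    (h : m ++ c = P ++ y :: (Q ++ y' :: R)) :
    (∃ R₁, m = P ++ y :: (Q ++ y' :: R₁) ∧ R = R₁ ++ c) ∨
    (∃ Q₁ Q₂, m = P ++ y :: Q₁ ∧ c = Q₂ ++ y' :: R ∧ Q = Q₁ ++ Q₂) ∨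
    (∃ P₂, c = P₂ ++ y :: (Q ++ y' :: R) ∧ P = m ++ P₂) := by
  rcases List.append_eq_append_iff.mp h with ⟨P₂, rfl, hc⟩ | ⟨_ | ⟨t, T⟩, rfl, hT⟩
  · exact .inr (.inr ⟨P₂, hc, rfl⟩)
  · exact .inr (.inr ⟨[], by simpa using hT.symm, by simp⟩)
  obtain ⟨rfl, hQR⟩ : y = t ∧ Q ++ y' :: R = T ++ c := by simpa using hT
  rcases List.append_eq_append_iff.mp hQR with ⟨_ | ⟨s, S⟩, rfl, hS⟩ | ⟨S, rfl, rfl⟩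
  · exact .inr (.inl ⟨Q, [], by simp, by simpa using hS.symm, by simp⟩)
  · obtain ⟨rfl, rfl⟩ : y' = s ∧ R = S ++ c := by simpa using hS
    exact .inl ⟨S, by simp, rfl⟩
  · exact .inr (.inl ⟨T, S, by simp, rfl, rfl⟩)

theorem List.prod_map_mul_prod_map_of_commute {M ι : Type*} [Monoid M] {l : List ι}
    (hl : l.Nodup) (f g : ι → M) (h : ∀ i ∈ l, ∀ j ∈ l, i ≠ j → Commute (f i) (g j)) :
    (l.map f).prod * (l.map g).prod = (l.map fun i => f i * g i).prod := by
  induction l with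
  | nil => simp
  | cons i l ih =>
    obtain ⟨hi, hl⟩ := List.nodup_cons.mp hl
    have hcomm : Commute (l.map f).prod (g i) := Commute.list_prod_left _ _ <| by
      simp only [List.mem_map]
      rintro _ ⟨j, hj, rfl⟩
      exact h j (by simp [hj]) i (by simp) (ne_of_mem_of_not_mem hj hi)
    rw [List.map_cons, List.map_cons, List.map_cons, List.prod_cons, List.prod_cons,
      List.prod_cons, hcomm.mul_mul_mul_comm,
      ih hl fun i hi j hj => h i (by simp [hi]) j (by simp [hj])]

theorem TraceStep.symm (hsym : ∀ α β, I α β → I β α) {u v : List (Letter L G)}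
    (h : TraceStep I G u v) : TraceStep I G v u := by
  obtain ⟨x, y, a, b, hab⟩ := h
  exact .swap x y b a (hsym _ _ hab)

namespace TraceEquiv

theorem refl (u : List (Letter L G)) : TraceEquiv I G u u := Relation.EqvGen.refl u

theorem symm {u v : List (Letter L G)} (h : TraceEquiv I G u v) : TraceEquiv I G v u :=
  Relation.EqvGen.symm _ _ h

theorem trans {u v w : List (Letter L G)} (h : TraceEquiv I G u v)
    (h' : TraceEquiv I G v w) : TraceEquiv I G u w :=
  Relation.EqvGen.trans _ _ _ h h'

theorem of_step {u v : List (Letter L G)} (h : TraceStep I G u v) : TraceEquiv I G u v :=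
  .rel _ _ h

theorem map {f : List (Letter L G) → List (Letter L G)}
    (hf : ∀ u v, TraceStep I G u v → TraceStep I G (f u) (f v)) {u v : List (Letter L G)}
    (h : TraceEquiv I G u v) : TraceEquiv I G (f u) (f v) :=
  Relation.EqvGen.rec (fun _ _ h => of_step (hf _ _ h)) (fun _ => refl _)
    (fun _ _ _ ih => ih.symm) (fun _ _ _ _ _ ih ih' => ih.trans ih') h

theorem apply_eq {β : Sort*} {f : List (Letter L G) → β}
    (hf : ∀ u v, TraceStep I G u v → f u = f v) {u v : List (Letter L G)}
    (h : TraceEquiv I G u v) : f u = f v :=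
  Relation.EqvGen.rec (fun _ _ h => hf _ _ h) (fun _ => rfl)
    (fun _ _ _ ih => ih.symm) (fun _ _ _ _ _ ih ih' => ih.trans ih') h

theorem append_left (w : List (Letter L G)) {u v : List (Letter L G)}
    (h : TraceEquiv I G u v) : TraceEquiv I G (w ++ u) (w ++ v) :=
  h.map <| by
    rintro _ _ ⟨x, y, a, b, hab⟩
    simpa using TraceStep.swap (w ++ x) y a b hab

theorem append_right (w : List (Letter L G)) {u v : List (Letter L G)}
    (h : TraceEquiv I G u v) : TraceEquiv I G (u ++ w) (v ++ w) :=
  h.map (f := (· ++ w)) <| by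
    rintro _ _ ⟨x, y, a, b, hab⟩
    simpa using TraceStep.swap x (y ++ w) a b hab

theorem append {u v u' v' : List (Letter L G)} (h : TraceEquiv I G u u')
    (h' : TraceEquiv I G v v') : TraceEquiv I G (u ++ v) (u' ++ v') :=
  (h.append_right v).trans (h'.append_left u')

theorem cons (x : Letter L G) {u v : List (Letter L G)} (h : TraceEquiv I G u v) :
    TraceEquiv I G (x :: u) (x :: v) :=
  h.append_left [x]

theorem reverse (hsym : ∀ α β, I α β → I β α) {u v : List (Letter L G)}
    (h : TraceEquiv I G u v) : TraceEquiv I G u.reverse v.reverse :=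
  h.map <| by
    rintro _ _ ⟨x, y, a, b, hab⟩
    simpa using TraceStep.swap y.reverse x.reverse b a (hsym _ _ hab)

theorem length_eq {u v : List (Letter L G)} (h : TraceEquiv I G u v) :
    u.length = v.length :=
  h.apply_eq <| by rintro _ _ ⟨⟩; simp

theorem reflTransGen (hsym : ∀ α β, I α β → I β α) {u v : List (Letter L G)}
    (h : TraceEquiv I G u v) : Relation.ReflTransGen (TraceStep I G) u v :=
  haveI : Std.Symm (TraceStep I G) := ⟨fun _ _ h => h.symm hsym⟩
  Relation.EqvGen.eqvGen_eq_reflTransGen (r := TraceStep I G) ▸ h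

theorem of_perm (hsym : ∀ α β, I α β → I β α) {u v : List (Letter L G)}
    (h : u.Perm v) (hu : u.Pairwise fun x y => I x.1 y.1) : TraceEquiv I G u v := by
  induction h with
  | nil => exact refl _
  | cons x _ ih => exact (ih (List.pairwise_cons.mp hu).2).cons x
  | swap x y l =>
    exact of_step (.swap [] l y x ((List.pairwise_cons.mp hu).1 x List.mem_cons_self))
  | trans h₁ _ ih₁ ih₂ =>
    exact (ih₁ hu).trans (ih₂ ((h₁.pairwise_iff fun hxy => hsym _ _ hxy).mp hu))

theorem cons_append_of_indepWord {A : List (Letter L G)} {x : Letter L G}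
    (hA : IndepWord I G x.1 A) (B : List (Letter L G)) :
    TraceEquiv I G (A ++ x :: B) (x :: (A ++ B)) := by
  induction A with
  | nil => exact refl _
  | cons c A ih =>
    have hc : TraceStep I G ([] ++ c :: x :: (A ++ B)) ([] ++ x :: c :: (A ++ B)) :=
      .swap [] _ c x (hA c List.mem_cons_self)
    exact ((ih fun d hd => hA d (List.mem_cons_of_mem c hd)).cons c).trans (of_step hc)

theorem append_concat_of_indepWord {B : List (Letter L G)} {x : Letter L G}
    (hsym : ∀ α β, I α β → I β α) (A : List (Letter L G)) (hB : IndepWord I G x.1 B) :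
    TraceEquiv I G (A ++ x :: B) (A ++ B ++ [x]) := by
  simpa using (cons_append_of_indepWord (B := A.reverse) (x := x)
    (fun c hc => hB c (List.mem_reverse.mp hc))).reverse hsym

end TraceEquiv

theorem TraceStep.exists_eq_append_cons {u v : List (Letter L G)} (h : TraceStep I G u v)
    {A B : List (Letter L G)} {x : Letter L G} (hv : v = A ++ x :: B)
    (hA : IndepWord I G x.1 A) :
    ∃ A' B', u = A' ++ x :: B' ∧ IndepWord I G x.1 A' ∧
      TraceEquiv I G (A' ++ B') (A ++ B) := by
  obtain ⟨X, Y, a, b, hab⟩ := h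
  rcases List.append_eq_append_cons_append_cons (Q := []) (by simpa using hv.symm) with
    ⟨R, rfl, rfl⟩ | ⟨Q₁, Q₂, rfl, hB, hQ⟩ | ⟨_ | ⟨p, P⟩, hB, rfl⟩
  · refine ⟨X ++ a :: b :: R, B, by simp, fun c hc => hA c ?_, ?_⟩
    · simp only [List.mem_append, List.mem_cons] at hc ⊢
      tauto
    · simpa using TraceEquiv.of_step (.swap X (R ++ B) a b hab)
  · obtain ⟨rfl, rfl⟩ := List.append_eq_nil_iff.mp hQ.symm
    obtain ⟨rfl, rfl⟩ : x = a ∧ B = Y := by simpa using hB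
    exact ⟨X, b :: B, rfl, fun c hc => hA c (by simp [hc]), by simpa using .refl _⟩
  · obtain ⟨rfl, rfl⟩ : x = b ∧ B = a :: Y := by simpa using hB
    refine ⟨A ++ [a], Y, by simp, fun c hc => ?_, by simpa using .refl _⟩
    rcases List.mem_append.mp hc with hc | hc
    · exact hA c hc
    · rw [List.mem_singleton.mp hc]; exact hab
  · obtain ⟨rfl, rfl⟩ : x = p ∧ B = P ++ b :: a :: Y := by simpa using hB
    refine ⟨A, P ++ a :: b :: Y, by simp, hA, ?_⟩
    simpa using TraceEquiv.of_step (.swap (A ++ P) Y a b hab)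

theorem TraceEquiv.exists_eq_append_cons (hsym : ∀ α β, I α β → I β α)
    {u t : List (Letter L G)} {x : Letter L G} (h : TraceEquiv I G u (x :: t)) :
    ∃ A B, u = A ++ x :: B ∧ IndepWord I G x.1 A ∧ TraceEquiv I G (A ++ B) t := by
  replace h := h.reflTransGen hsym
  induction h using Relation.ReflTransGen.head_induction_on with
  | refl => exact ⟨[], t, rfl, by simp [IndepWord], .refl t⟩
  | head hstep _ ih =>
    obtain ⟨A, B, rfl, hA, hAB⟩ := ih
    obtain ⟨A', B', rfl, hA', hAB'⟩ := hstep.exists_eq_append_cons rfl hA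
    exact ⟨A', B', rfl, hA', hAB'.trans hAB⟩

theorem TraceEquiv.exists_eq_append_cons_of_concat (hsym : ∀ α β, I α β → I β α)
    {u t : List (Letter L G)} {x : Letter L G} (h : TraceEquiv I G u (t ++ [x])) :
    ∃ A B, u = A ++ x :: B ∧ IndepWord I G x.1 B ∧ TraceEquiv I G (A ++ B) t := by
  obtain ⟨A, B, hu, hA, hAB⟩ :=
    (by simpa using h.reverse hsym : TraceEquiv I G u.reverse (x :: t.reverse))
      |>.exists_eq_append_cons hsym
  refine ⟨B.reverse, A.reverse, ?_, fun c hc => hA c (List.mem_reverse.mp hc), ?_⟩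
  · simpa using congrArg List.reverse hu
  · simpa using hAB.reverse hsym

theorem Reduced.of_infix {v w : List (Letter L G)} (hw : Reduced I G w) (h : v <:+: w) :
    Reduced I G v := by
  obtain ⟨X, Z, rfl⟩ := h
  rintro ⟨β, b, b', A, W, C, rfl, hW⟩
  exact hw ⟨β, b, b', X ++ A, W, C ++ Z, by simp, hW⟩

theorem reduced_of_nodup_map_fst {w : List (Letter L G)} (h : (w.map Sigma.fst).Nodup) :
    Reduced I G w := by
  rintro ⟨β, b, b', A, W, C, rfl, -⟩
  simp [List.nodup_append] at h

theorem not_reduced_append_cons (hsym : ∀ α β, I α β → I β α) {A B : List (Letter L G)}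
    {x : Letter L G} (hAB : ¬ Reduced I G (A ++ B)) (hA : IndepWord I G x.1 A) :
    ¬ Reduced I G (A ++ x :: B) := by
  simp only [Reduced, not_not] at hAB ⊢
  obtain ⟨β, b, b', P, W, C, hPW, hW⟩ := hAB
  rcases List.append_eq_append_cons_append_cons hPW with
    ⟨R, rfl, rfl⟩ | ⟨W₁, W₂, rfl, rfl, rfl⟩ | ⟨P₂, rfl, rfl⟩
  · exact ⟨β, b, b', P, W, R ++ x :: B, by simp, hW⟩
  · refine ⟨β, b, b', P, W₁ ++ x :: W₂, C, by simp, fun c hc => ?_⟩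
    simp only [List.mem_append, List.mem_cons] at hc
    rcases hc with hc | rfl | hc
    · exact hW c (by simp [hc])
    · exact hsym _ _ (hA ⟨β, b⟩ (by simp))
    · exact hW c (by simp [hc])
  · exact ⟨β, b, b', A ++ x :: P₂, W, C, by simp, hW⟩

theorem not_reduced_of_traceEquiv (hirr : ∀ α, ¬ I α α) (hsym : ∀ α β, I α β → I β α)
    {β : L} {b b' : {g : G β // g ≠ 1}} :
    ∀ (X : List (Letter L G)) {u Y : List (Letter L G)},
      TraceEquiv I G u (X ++ ⟨β, b⟩ :: ⟨β, b'⟩ :: Y) → ¬ Reduced I G u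
  | [], u, Y, h => by
    obtain ⟨A, B, rfl, hA, hAB⟩ := TraceEquiv.exists_eq_append_cons hsym (by simpa using h)
    obtain ⟨A₁, B₁, hA₁B₁, hA₁, -⟩ := hAB.exists_eq_append_cons hsym
    rcases List.append_eq_append_iff.mp hA₁B₁ with ⟨T, rfl, rfl⟩ | ⟨_ | ⟨t, T⟩, rfl, hT⟩
    · exact fun hu => hu ⟨β, b, b', A, T, B₁, rfl, fun c hc => hA₁ c (by simp [hc])⟩
    · exact fun hu => hu ⟨β, b, b', A₁, [], B₁, by simp [hT], by simp [IndepWord]⟩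
    · obtain rfl : t = ⟨β, b'⟩ := by
        simp only [List.cons_append, List.cons.injEq] at hT
        exact hT.1.symm
      exact absurd (hA ⟨β, b'⟩ (by simp)) (hirr β)
  | x :: X, u, Y, h => by
    obtain ⟨A, B, rfl, hA, hAB⟩ := h.exists_eq_append_cons hsym
    exact not_reduced_append_cons hsym (not_reduced_of_traceEquiv hirr hsym X hAB) hA

theorem Reduced.of_traceEquiv (hirr : ∀ α, ¬ I α α) (hsym : ∀ α β, I α β → I β α)
    {u v : List (Letter L G)} (hu : Reduced I G u) (h : TraceEquiv I G u v) :
    Reduced I G v := by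
  rintro ⟨β, b, b', X, W, Y, rfl, hW⟩
  refine not_reduced_of_traceEquiv hirr hsym (b := b) (b' := b') X (Y := W ++ Y)
    (h.trans ?_) hu
  simpa using ((TraceEquiv.cons_append_of_indepWord hW Y).cons _).append_left X

theorem gpOf_commute {α β : L} (h : I α β) (g : G α) (k : G β) :
    Commute (gpOf I G α g) (gpOf I G β k) := by
  rw [← commutatorElement_eq_one_iff_commute]
  have hrel := (QuotientGroup.eq_one_iff _).mpr
    (Subgroup.subset_normalClosure (s := gpRels I G) ⟨α, β, g, k, h, rfl⟩)
  simp only [QuotientGroup.mk_mul, QuotientGroup.mk_inv] at hrel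
  exact hrel

@[simp]
theorem evalWord_cons (x : Letter L G) (u : List (Letter L G)) :
    evalWord I G (x :: u) = gpOf I G x.1 x.2.1 * evalWord I G u := by
  simp [evalWord]

@[simp]
theorem evalWord_append (u v : List (Letter L G)) :
    evalWord I G (u ++ v) = evalWord I G u * evalWord I G v := by
  simp [evalWord]

theorem evalWord_wordInv (u : List (Letter L G)) :
    evalWord I G (wordInv G u) = (evalWord I G u)⁻¹ := by
  simp only [evalWord, wordInv, List.prod_inv_reverse, List.map_reverse, List.map_map]
  congr 2

theorem TraceEquiv.evalWord_eq {u v : List (Letter L G)} (h : TraceEquiv I G u v) :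
    evalWord I G u = evalWord I G v :=
  h.apply_eq <| by
    rintro _ _ ⟨x, y, a, b, hab⟩
    simp [← mul_assoc, (gpOf_commute hab a.2.1 b.2.1).eq]

/-- The word `∏_{γ ∈ M} f γ`, its letters listed in the order of `M.toList`. -/
noncomputable def familyWord (M : Finset L) (f : ∀ γ ∈ M, {g : G γ // g ≠ 1}) :
    List (Letter L G) :=
  M.toList.attach.map fun x => ⟨x.1, f x.1 (Finset.mem_toList.mp x.2)⟩

section familyWord

variable {M : Finset L} (f : ∀ γ ∈ M, {g : G γ // g ≠ 1})

theorem map_fst_familyWord : (familyWord M f).map Sigma.fst = M.toList := by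
  simp [familyWord]

theorem nodup_map_fst_familyWord : ((familyWord M f).map Sigma.fst).Nodup :=
  map_fst_familyWord f ▸ M.nodup_toList

theorem mem_familyWord {l : Letter L G} :
    l ∈ familyWord M f ↔ ∃ γ, ∃ h : γ ∈ M, ⟨γ, f γ h⟩ = l := by
  simp [familyWord]

theorem mem_of_mem_alph_familyWord {γ : L} (h : γ ∈ alph G (familyWord M f)) : γ ∈ M := by
  obtain ⟨l, hl, rfl⟩ := h
  obtain ⟨δ, hδ, rfl⟩ := (mem_familyWord f).mp hl
  exact hδ

theorem reduced_familyWord : Reduced I G (familyWord M f) :=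
  reduced_of_nodup_map_fst (nodup_map_fst_familyWord f)

theorem pairwise_familyWord (hM : (M : Set L).Pairwise I) :
    (familyWord M f).Pairwise fun x y => I x.1 y.1 := by
  rw [← List.pairwise_map (f := Sigma.fst), map_fst_familyWord]
  exact M.nodup_toList.pairwise_of_forall_ne fun γ hγ δ hδ =>
    hM (Finset.mem_toList.mp hγ) (Finset.mem_toList.mp hδ)

theorem evalWord_familyWord_mul (hM : (M : Set L).Pairwise I)
    (f' : ∀ γ ∈ M, {g : G γ // g ≠ 1}) (hf : ∀ γ (h : γ ∈ M), (f' γ h : G γ) * f γ h ≠ 1) :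
    evalWord I G (familyWord M f') * evalWord I G (familyWord M f) =
      evalWord I G (familyWord M fun γ h => ⟨f' γ h * f γ h, hf γ h⟩) := by
  simp only [evalWord, familyWord, List.map_map, Function.comp_def, map_mul]
  refine List.prod_map_mul_prod_map_of_commute (List.nodup_attach.mpr M.nodup_toList) _ _ ?_
  intro γ _ δ _ hγδ
  exact gpOf_commute (hM (Finset.mem_toList.mp γ.2) (Finset.mem_toList.mp δ.2)
    (fun h => hγδ (Subtype.ext h))) _ _

theorem familyWord_insert_perm [DecidableEq L] {α : L} (hα : α ∉ M)
    (x : {g : G α // g ≠ 1}) :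
    (familyWord (insert α M) (Finset.Pi.cons M α x f)).Perm (⟨α, x⟩ :: familyWord M f) := by
  have hαf : (⟨α, x⟩ : Letter L G) ∉ familyWord M f := fun h =>
    hα (mem_of_mem_alph_familyWord f ⟨_, h, rfl⟩)
  refine (List.perm_ext_iff_of_nodup (nodup_map_fst_familyWord _).of_map
    (List.nodup_cons.mpr ⟨hαf, (nodup_map_fst_familyWord f).of_map⟩)).mpr fun l => ?_
  simp only [mem_familyWord, List.mem_cons]
  constructor
  · rintro ⟨γ, hγ, rfl⟩
    by_cases hγα : γ = α
    · subst hγα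
      simp [Finset.Pi.cons_same]
    · refine .inr ⟨γ, (Finset.mem_insert.mp hγ).resolve_left hγα, ?_⟩
      rw [Finset.Pi.cons_ne (Ne.symm hγα)]
  · rintro (rfl | ⟨γ, hγ, rfl⟩)
    · exact ⟨α, Finset.mem_insert_self α M, by rw [Finset.Pi.cons_same]⟩
    · refine ⟨γ, Finset.mem_insert_of_mem hγ, ?_⟩
      rw [Finset.Pi.cons_ne (fun h : α = γ => hα (h ▸ hγ))]

theorem traceEquiv_familyWord_insert [DecidableEq L] (hsym : ∀ α β, I α β → I β α) {α : L}
    (hα : α ∉ M) (hM : (↑(insert α M) : Set L).Pairwise I) (f' : ∀ γ ∈ M, {g : G γ // g ≠ 1})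
    (x x' : {g : G α // g ≠ 1}) (m : List (Letter L G)) :
    TraceEquiv I G (familyWord (insert α M) (Finset.Pi.cons M α x f) ++ m ++
        familyWord (insert α M) (Finset.Pi.cons M α x' f'))
      ([⟨α, x⟩] ++ (familyWord M f ++ m ++ familyWord M f') ++ [⟨α, x'⟩]) := by
  have hr := TraceEquiv.of_perm hsym (familyWord_insert_perm f hα x) (pairwise_familyWord _ hM)
  have hs := TraceEquiv.of_perm hsym
    ((familyWord_insert_perm f' hα x').trans (List.perm_append_singleton _ _).symm)
    (pairwise_familyWord _ hM)
  simpa using (hr.append_right m).append hs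

theorem familyWord_empty (f : ∀ γ ∈ (∅ : Finset L), {g : G γ // g ≠ 1}) :
    familyWord ∅ f = [] :=
  List.eq_nil_of_length_eq_zero (by simp [familyWord])

end familyWord

variable (I) in
def HasInitialLetter (γ : L) (u : List (Letter L G)) : Prop :=
  ∃ (x : {g : G γ // g ≠ 1}) (w : List (Letter L G)), TraceEquiv I G u (⟨γ, x⟩ :: w)

variable (I) in
def HasFinalLetter (γ : L) (u : List (Letter L G)) : Prop :=
  ∃ (x : {g : G γ // g ≠ 1}) (w : List (Letter L G)), TraceEquiv I G u (w ++ [⟨γ, x⟩])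

variable (I) in
def Pinch (γ : L) (x x' : {g : G γ // g ≠ 1}) (u : List (Letter L G)) : Prop :=
  ∃ w, TraceEquiv I G u (⟨γ, x⟩ :: (w ++ [⟨γ, x'⟩]))

variable (I) in
def NoEndLetterIn (N : Finset L) (u : List (Letter L G)) : Prop :=
  ∀ γ ∈ N, ¬ HasInitialLetter I γ u ∧ ¬ HasFinalLetter I γ u

variable (I) in
def NoPinchIndepOf (N : Finset L) (u : List (Letter L G)) : Prop :=
  ∀ γ, (∀ δ ∈ N, I γ δ) → ∀ x x', ¬ Pinch I γ x x' u

variable (I) in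
def NoCancellingPinchIndepOf (N : Finset L) (u : List (Letter L G)) : Prop :=
  ∀ γ, (∀ δ ∈ N, I γ δ) → ∀ x x', Pinch I γ x x' u → (x' : G γ) * x ≠ 1

section EndLetters

variable {γ : L} {u v : List (Letter L G)}

theorem HasInitialLetter.of_traceEquiv (hv : HasInitialLetter I γ v)
    (h : TraceEquiv I G u v) : HasInitialLetter I γ u :=
  let ⟨x, w, hw⟩ := hv; ⟨x, w, h.trans hw⟩

theorem HasFinalLetter.of_traceEquiv (hv : HasFinalLetter I γ v) (h : TraceEquiv I G u v) :
    HasFinalLetter I γ u :=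
  let ⟨x, w, hw⟩ := hv; ⟨x, w, h.trans hw⟩

theorem Pinch.of_traceEquiv {x x' : {g : G γ // g ≠ 1}} (hv : Pinch I γ x x' v)
    (h : TraceEquiv I G u v) : Pinch I γ x x' u :=
  let ⟨w, hw⟩ := hv; ⟨w, h.trans hw⟩

theorem hasInitialLetter_append_cons {A : List (Letter L G)} (hA : IndepWord I G γ A)
    (x : {g : G γ // g ≠ 1}) (B : List (Letter L G)) :
    HasInitialLetter I γ (A ++ ⟨γ, x⟩ :: B) :=
  ⟨x, A ++ B, TraceEquiv.cons_append_of_indepWord hA B⟩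

theorem hasFinalLetter_append_cons (hsym : ∀ α β, I α β → I β α) (A : List (Letter L G))
    (x : {g : G γ // g ≠ 1}) {B : List (Letter L G)} (hB : IndepWord I G γ B) :
    HasFinalLetter I γ (A ++ ⟨γ, x⟩ :: B) :=
  ⟨x, A ++ B, TraceEquiv.append_concat_of_indepWord hsym A hB⟩

theorem pinch_append_cons (hsym : ∀ α β, I α β → I β α) {A B : List (Letter L G)}
    (hA : IndepWord I G γ A) (x x' : {g : G γ // g ≠ 1}) (T : List (Letter L G))
    (hB : IndepWord I G γ B) : Pinch I γ x x' (A ++ ⟨γ, x⟩ :: (T ++ ⟨γ, x'⟩ :: B)) := by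
  refine ⟨A ++ T ++ B, (TraceEquiv.cons_append_of_indepWord hA _).trans (.cons _ ?_)⟩
  simpa using TraceEquiv.append_concat_of_indepWord hsym (A ++ T) hB

theorem HasInitialLetter.append (hv : HasInitialLetter I γ v) {A : List (Letter L G)}
    (hA : IndepWord I G γ A) (B : List (Letter L G)) : HasInitialLetter I γ (A ++ v ++ B) :=
  let ⟨x, w, hw⟩ := hv
  (hasInitialLetter_append_cons hA x (w ++ B)).of_traceEquiv <| by
    simpa using (hw.append_left A).append_right B

theorem HasFinalLetter.append (hsym : ∀ α β, I α β → I β α) (hv : HasFinalLetter I γ v)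
    (A : List (Letter L G)) {B : List (Letter L G)} (hB : IndepWord I G γ B) :
    HasFinalLetter I γ (A ++ v ++ B) :=
  let ⟨x, w, hw⟩ := hv
  (hasFinalLetter_append_cons hsym (A ++ w) x hB).of_traceEquiv <| by
    simpa using (hw.append_left A).append_right B

theorem Pinch.append (hsym : ∀ α β, I α β → I β α) {x x' : {g : G γ // g ≠ 1}}
    (hv : Pinch I γ x x' v) {A B : List (Letter L G)} (hA : IndepWord I G γ A)
    (hB : IndepWord I G γ B) : Pinch I γ x x' (A ++ v ++ B) :=
  let ⟨w, hw⟩ := hv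
  (pinch_append_cons hsym hA x x' w hB).of_traceEquiv <| by
    simpa using (hw.append_left A).append_right B

theorem HasInitialLetter.mem_alph (hsym : ∀ α β, I α β → I β α)
    (h : HasInitialLetter I γ u) : γ ∈ alph G u := by
  obtain ⟨x, w, hw⟩ := h
  obtain ⟨A, B, rfl, -⟩ := hw.exists_eq_append_cons hsym
  exact ⟨⟨γ, x⟩, by simp, rfl⟩

theorem HasFinalLetter.mem_alph (hsym : ∀ α β, I α β → I β α)
    (h : HasFinalLetter I γ u) : γ ∈ alph G u := by
  obtain ⟨x, w, hw⟩ := h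
  obtain ⟨A, B, rfl, -⟩ := hw.exists_eq_append_cons_of_concat hsym
  exact ⟨⟨γ, x⟩, by simp, rfl⟩

theorem not_hasInitialLetter_of_reduced_cons (hirr : ∀ α, ¬ I α α)
    (hsym : ∀ α β, I α β → I β α) {a : {g : G γ // g ≠ 1}} (h : Reduced I G (⟨γ, a⟩ :: u)) :
    ¬ HasInitialLetter I γ u := fun ⟨x, w, hw⟩ =>
  not_reduced_of_traceEquiv hirr hsym [] (by simpa using hw.cons ⟨γ, a⟩) h

theorem not_hasFinalLetter_of_reduced_concat (hirr : ∀ α, ¬ I α α)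
    (hsym : ∀ α β, I α β → I β α) {a : {g : G γ // g ≠ 1}}
    (h : Reduced I G (u ++ [⟨γ, a⟩])) : ¬ HasFinalLetter I γ u := fun ⟨x, w, hw⟩ =>
  not_reduced_of_traceEquiv hirr hsym w (by simpa using hw.append_right [⟨γ, a⟩]) h

theorem Pinch.exists_eq (hirr : ∀ α, ¬ I α α) (hsym : ∀ α β, I α β → I β α)
    {x x' : {g : G γ // g ≠ 1}} (h : Pinch I γ x x' u) :
    ∃ A T B, u = A ++ ⟨γ, x⟩ :: (T ++ ⟨γ, x'⟩ :: B) ∧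
      IndepWord I G γ A ∧ IndepWord I G γ B := by
  obtain ⟨w, hw⟩ := h
  obtain ⟨A, B, rfl, hA, hAB⟩ := hw.exists_eq_append_cons hsym
  obtain ⟨A₁, B₁, hA₁B₁, hB₁, -⟩ := hAB.exists_eq_append_cons_of_concat hsym
  rcases List.append_eq_append_iff.mp hA₁B₁ with ⟨T, rfl, rfl⟩ | ⟨_ | ⟨t, T⟩, rfl, hT⟩
  · exact ⟨A, T, B₁, rfl, hA, hB₁⟩
  · exact ⟨A₁, [], B₁, by simp [hT], by simpa using hA, hB₁⟩
  · obtain rfl : t = ⟨γ, x'⟩ := by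
      simp only [List.cons_append, List.cons.injEq] at hT
      exact hT.1.symm
    exact absurd (hA ⟨γ, x'⟩ (by simp)) (hirr γ)

@[simp]
theorem indepWord_singleton {x : Letter L G} : IndepWord I G γ [x] ↔ I x.1 γ := by
  simp [IndepWord]

theorem not_pinch_of_nodup_map_fst (hirr : ∀ α, ¬ I α α) (hsym : ∀ α β, I α β → I β α)
    (hu : (u.map Sigma.fst).Nodup) (x x' : {g : G γ // g ≠ 1}) : ¬ Pinch I γ x x' u := by
  intro h
  obtain ⟨A, T, B, rfl, -⟩ := h.exists_eq hirr hsym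
  simp [List.nodup_append] at hu

end EndLetters

theorem not_reduced_append (hsym : ∀ α β, I α β → I β α) {m c : List (Letter L G)}
    (h : ¬ Reduced I G (m ++ c)) :
    ¬ Reduced I G m ∨ ¬ Reduced I G c ∨
      ∃ β, HasFinalLetter I β m ∧ HasInitialLetter I β c := by
  simp only [Reduced, not_not] at h
  obtain ⟨β, b, b', X, W, Y, hXY, hW⟩ := h
  rcases List.append_eq_append_cons_append_cons hXY with
    ⟨R, rfl, -⟩ | ⟨W₁, W₂, rfl, rfl, rfl⟩ | ⟨P, rfl, -⟩
  · exact .inl fun hm => hm ⟨β, b, b', X, W, R, rfl, hW⟩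
  · exact .inr <| .inr ⟨β, hasFinalLetter_append_cons hsym X b fun l hl => hW l (by simp [hl]),
      hasInitialLetter_append_cons (fun l hl => hW l (by simp [hl])) b' Y⟩
  · exact .inr <| .inl fun hc => hc ⟨β, b, b', P, W, Y, rfl, hW⟩

theorem Pinch.of_append (hirr : ∀ α, ¬ I α α) (hsym : ∀ α β, I α β → I β α) {γ : L}
    {x x' : {g : G γ // g ≠ 1}} {m c : List (Letter L G)} (h : Pinch I γ x x' (m ++ c)) :
    (Pinch I γ x x' m ∧ IndepWord I G γ c) ∨
      (HasInitialLetter I γ m ∧ HasFinalLetter I γ c) ∨ Pinch I γ x x' c := by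
  obtain ⟨A, T, B, hmc, hA, hB⟩ := h.exists_eq hirr hsym
  rcases List.append_eq_append_cons_append_cons hmc with
    ⟨R, rfl, rfl⟩ | ⟨T₁, T₂, rfl, rfl, -⟩ | ⟨P, rfl, rfl⟩
  · exact .inl ⟨pinch_append_cons hsym hA x x' T fun l hl => hB l (by simp [hl]),
      fun l hl => hB l (by simp [hl])⟩
  · exact .inr <| .inl ⟨hasInitialLetter_append_cons hA x T₁,
      hasFinalLetter_append_cons hsym T₂ x' hB⟩
  · exact .inr <| .inr <| pinch_append_cons hsym (fun l hl => hA l (by simp [hl])) x x' T hB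

theorem isCyclicallyReduced_append_familyWord (hirr : ∀ α, ¬ I α α)
    (hsym : ∀ α β, I α β → I β α) {M : Finset L} (f : ∀ γ ∈ M, {g : G γ // g ≠ 1})
    {m : List (Letter L G)} (hm : Reduced I G m)
    (hend : NoEndLetterIn I M m) (hpinch : NoPinchIndepOf I M m) :
    IsCyclicallyReduced I G (m ++ familyWord M f) := by
  constructor
  · by_contra hmc
    rcases not_reduced_append hsym hmc with hm' | hc | ⟨β, hfin, hinit⟩
    · exact hm' hm
    · exact hc (reduced_familyWord f)
    · exact (hend β (mem_of_mem_alph_familyWord f (hinit.mem_alph hsym))).2 hfin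
  · rintro ⟨γ, x, x', w, hw⟩
    rcases Pinch.of_append hirr hsym ⟨w, hw⟩ with ⟨hpm, hc⟩ | ⟨hinit, hfin⟩ | hpc
    · refine hpinch γ (fun δ hδ => hsym _ _ (hc ⟨δ, f δ hδ⟩ ?_)) x x' hpm
      exact (mem_familyWord f).mpr ⟨δ, hδ, rfl⟩
    · exact (hend γ (mem_of_mem_alph_familyWord f (hfin.mem_alph hsym))).1 hinit
    · exact not_pinch_of_nodup_map_fst hirr hsym (nodup_map_fst_familyWord f) x x' hpc

theorem NoEndLetterIn.insert_of_traceEquiv [DecidableEq L] (hirr : ∀ α, ¬ I α α)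
    (hsym : ∀ α β, I α β → I β α) {N : Finset L} {α : L} {x x' : {g : G α // g ≠ 1}}
    {u v : List (Letter L G)} (hN : NoEndLetterIn I N u) (hu : Reduced I G u)
    (huv : TraceEquiv I G u ([⟨α, x⟩] ++ v ++ [⟨α, x'⟩])) (hαN : ∀ δ ∈ N, I α δ) :
    NoEndLetterIn I (insert α N) v := by
  have hxv := hu.of_traceEquiv hirr hsym huv
  intro γ hγ
  rcases Finset.mem_insert.mp hγ with rfl | hγ
  · exact ⟨not_hasInitialLetter_of_reduced_cons hirr hsym (a := x)
      (hxv.of_infix ⟨[], [⟨_, x'⟩], by simp⟩),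
      not_hasFinalLetter_of_reduced_concat hirr hsym (a := x')
      (hxv.of_infix ⟨[⟨_, x⟩], [], by simp⟩)⟩
  · exact ⟨fun h => (hN γ hγ).1 ((h.append (by simpa using hαN γ hγ) _).of_traceEquiv huv),
      fun h => (hN γ hγ).2 ((h.append hsym _ (by simpa using hαN γ hγ)).of_traceEquiv huv)⟩

theorem NoCancellingPinchIndepOf.insert_of_traceEquiv [DecidableEq L]
    (hsym : ∀ α β, I α β → I β α) {N : Finset L} {α : L} {x x' : {g : G α // g ≠ 1}}
    {u v : List (Letter L G)} (hN : NoCancellingPinchIndepOf I N u)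
    (huv : TraceEquiv I G u ([⟨α, x⟩] ++ v ++ [⟨α, x'⟩])) :
    NoCancellingPinchIndepOf I (insert α N) v := by
  intro γ hγ y y' hy
  have hαγ : I α γ := hsym _ _ (hγ α (Finset.mem_insert_self α N))
  exact hN γ (fun δ hδ => hγ δ (Finset.mem_insert_of_mem hδ)) y y'
    ((hy.append hsym (by simpa using hαγ) (by simpa using hαγ)).of_traceEquiv huv)

/-- `N` holds the nodes of the pinches already peeled off around `u`. A pinch of `u` is peeled
only if its node is independent of all of `N`, so that its two letters commute with the
letters peeled before. -/
theorem exists_traceEquiv_familyWord_append_familyWord [DecidableEq L]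
    (hirr : ∀ α, ¬ I α α) (hsym : ∀ α β, I α β → I β α) (N : Finset L)
    (u : List (Letter L G)) (hu : Reduced I G u) (hN : NoEndLetterIn I N u)
    (hcancel : NoCancellingPinchIndepOf I N u) :
    ∃ (M : Finset L) (a b : ∀ γ ∈ M, {g : G γ // g ≠ 1}) (m : List (Letter L G)),
      (M : Set L).Pairwise I ∧ (∀ γ ∈ M, ∀ δ ∈ N, I γ δ) ∧
      (∀ γ (h : γ ∈ M), (b γ h : G γ) * a γ h ≠ 1) ∧
      TraceEquiv I G u (familyWord M a ++ m ++ familyWord M b) ∧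
      NoEndLetterIn I (N ∪ M) m ∧ NoPinchIndepOf I (N ∪ M) m := by
  induction hn : u.length using Nat.strong_induction_on generalizing u N with | _ n ih =>
  by_cases hp : ∃ α, (∀ δ ∈ N, I α δ) ∧ ∃ x x', Pinch I α x x' u
  swap
  · simp only [not_exists, not_and] at hp
    refine ⟨∅, fun γ h => absurd h (Finset.notMem_empty γ),
      fun γ h => absurd h (Finset.notMem_empty γ), u, by simp, by simp, by simp,
      by simpa [familyWord_empty] using .refl u, by simpa using hN, fun γ hγ x x' => ?_⟩
    exact hp γ (fun δ hδ => hγ δ (Finset.mem_union_left _ hδ)) x x'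
  obtain ⟨α, hαN, x, x', v, huv⟩ := hp
  have huv' : TraceEquiv I G u ([⟨α, x⟩] ++ v ++ [⟨α, x'⟩]) := by simpa using huv
  have hv : Reduced I G v :=
    (hu.of_traceEquiv hirr hsym huv').of_infix ⟨[⟨α, x⟩], [⟨α, x'⟩], rfl⟩
  have hvn : v.length < n := by
    have := huv.length_eq; simp only [List.length_cons, List.length_append] at this; omega
  obtain ⟨M, a, b, m, hM, hMN, hba, hvm, hm, hmpinch⟩ := ih v.length hvn (insert α N) v hv
    (hN.insert_of_traceEquiv hirr hsym hu huv' hαN) (hcancel.insert_of_traceEquiv hsym huv') rfl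
  have hαM : α ∉ M := fun h => hirr α (hMN α h α (Finset.mem_insert_self α N))
  have hMα : (↑(insert α M) : Set L).Pairwise I := by
    rw [Finset.coe_insert, Set.pairwise_insert]
    exact ⟨hM, fun γ hγ _ => ⟨hsym _ _ (hMN γ hγ α (Finset.mem_insert_self α N)),
      hMN γ hγ α (Finset.mem_insert_self α N)⟩⟩
  have hNM : insert α N ∪ M = N ∪ insert α M := by
    rw [Finset.insert_union, Finset.union_insert]
  refine ⟨insert α M, Finset.Pi.cons M α x a, Finset.Pi.cons M α x' b, m, hMα, ?_, ?_,
    huv'.trans (((hvm.append_left _).append_right _).trans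
      (traceEquiv_familyWord_insert a hsym hαM hMα b x x' m).symm),
    hNM ▸ hm, hNM ▸ hmpinch⟩
  · intro γ hγ δ hδ
    rcases Finset.mem_insert.mp hγ with rfl | hγ
    · exact hαN δ hδ
    · exact hMN γ hγ δ (Finset.mem_insert_of_mem hδ)
  · intro γ hγ
    by_cases hγα : γ = α
    · subst hγα
      simpa only [Finset.Pi.cons_same] using hcancel γ hαN x x' ⟨v, huv⟩
    · rw [Finset.Pi.cons_ne (Ne.symm hγα), Finset.Pi.cons_ne (Ne.symm hγα)]
      exact hba γ _

theorem exists_traceEquiv_append_append_wordInv (hirr : ∀ α, ¬ I α α)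
    (hsym : ∀ α β, I α β → I β α) (u : List (Letter L G)) (hu : Reduced I G u) :
    ∃ p v, TraceEquiv I G u (p ++ v ++ wordInv G p) ∧ NoCancellingPinchIndepOf I ∅ v := by
  induction hn : u.length using Nat.strong_induction_on generalizing u with | _ n ih =>
  by_cases hc : ∃ γ x x', Pinch I γ x x' u ∧ (x' : G γ) * x = 1
  swap
  · simp only [not_exists, not_and] at hc
    exact ⟨[], u, by simpa [wordInv] using .refl u, fun γ _ => hc γ⟩
  obtain ⟨γ, x, x', ⟨w, huw⟩, hxx'⟩ := hc
  have hw : Reduced I G w :=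
    (hu.of_traceEquiv hirr hsym huw).of_infix ⟨[⟨γ, x⟩], [⟨γ, x'⟩], by simp⟩
  have hwn : w.length < n := by
    have := huw.length_eq; simp only [List.length_cons, List.length_append] at this; omega
  obtain ⟨p, v, hwp, hv⟩ := ih w.length hwn w hw rfl
  have hx' : (⟨γ, x'⟩ : Letter L G) = letterInv G ⟨γ, x⟩ :=
    congrArg _ (Subtype.ext (eq_inv_of_mul_eq_one_left hxx'))
  refine ⟨⟨γ, x⟩ :: p, v, huw.trans ?_, hv⟩
  simpa [wordInv, hx'] using (hwp.append_right [⟨γ, x'⟩]).cons ⟨γ, x⟩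

theorem exists_isCyclicallyReduced_append_familyWord (hirr : ∀ α, ¬ I α α)
    (hsym : ∀ α β, I α β → I β α) (v : List (Letter L G)) (hv : Reduced I G v)
    (hcancel : NoCancellingPinchIndepOf I ∅ v) :
    ∃ (M : Finset L) (a b : ∀ γ ∈ M, {g : G γ // g ≠ 1}) (m : List (Letter L G))
      (hba : ∀ γ (h : γ ∈ M), (b γ h : G γ) * a γ h ≠ 1),
      (M : Set L).Pairwise I ∧ TraceEquiv I G v (familyWord M a ++ m ++ familyWord M b) ∧
      IsCyclicallyReduced I G (m ++ familyWord M fun γ h => ⟨(b γ h : G γ) * a γ h, hba γ h⟩) ∧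
      IsConj (evalWord I G v)
        (evalWord I G (m ++ familyWord M fun γ h => ⟨(b γ h : G γ) * a γ h, hba γ h⟩)) := by
  classical
  obtain ⟨M, a, b, m, hM, -, hba, hvm, hend, hpinch⟩ :=
    exists_traceEquiv_familyWord_append_familyWord hirr hsym ∅ v hv (by simp [NoEndLetterIn])
      hcancel
  refine ⟨M, a, b, m, hba, hM, hvm, ?_, ?_⟩
  · have hm := (hv.of_traceEquiv hirr hsym hvm).of_infix (List.infix_append _ _ _)
    exact isCyclicallyReduced_append_familyWord hirr hsym _ hm (by simpa using hend)
      (by simpa using hpinch)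
  · rw [hvm.evalWord_eq, evalWord_append, evalWord_append, evalWord_append,
      ← evalWord_familyWord_mul a hM b hba, isConj_iff]
    exact ⟨(evalWord I G (familyWord M a))⁻¹, by group⟩

end

theorem exists_cyclically_reduced_conjugate_decomposition_general
    {L : Type}
    (I : L → L → Prop) (G : L → Type) [∀ α, Group (G α)]
    (hirr : ∀ α, ¬ I α α) (hsym : ∀ α β, I α β → I β α)
    (u : List (Letter L G)) (hu : Reduced I G u) :
    ∃ (p r m s : List (Letter L G)) (M : Finset L)
      (a b : (α : L) → α ∈ M → {g : G α // g ≠ 1})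
      (hba : ∀ (α : L) (h : α ∈ M), (b α h : G α) * (a α h : G α) ≠ 1)
      (c : List (Letter L G)),
      c = M.toList.attach.map (fun x =>
        (⟨x.1, ⟨(b x.1 (Finset.mem_toList.mp x.2) : G x.1) *
               (a x.1 (Finset.mem_toList.mp x.2) : G x.1),
               hba x.1 (Finset.mem_toList.mp x.2)⟩⟩ : Letter L G)) ∧
      Reduced I G p ∧ Reduced I G r ∧ Reduced I G m ∧ Reduced I G s ∧
      (∀ α ∈ M, ∀ β ∈ M, α ≠ β → I α β) ∧
      TraceEquiv I G u (p ++ r ++ m ++ s ++ wordInv G p) ∧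
      TraceEquiv I G r (M.toList.attach.map (fun x =>
        (⟨x.1, a x.1 (Finset.mem_toList.mp x.2)⟩ : Letter L G))) ∧
      TraceEquiv I G s (M.toList.attach.map (fun x =>
        (⟨x.1, b x.1 (Finset.mem_toList.mp x.2)⟩ : Letter L G))) ∧
      IsCyclicallyReduced I G (m ++ c) ∧
      IsConj (evalWord I G u) (evalWord I G (m ++ c)) := by
  obtain ⟨p, v, huv, hcancel⟩ := exists_traceEquiv_append_append_wordInv hirr hsym u hu
  have hpv := hu.of_traceEquiv hirr hsym huv
  have hv := hpv.of_infix (List.infix_append p v _)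
  obtain ⟨M, a, b, m, hba, hM, hvm, hcyc, hconj⟩ :=
    exists_isCyclicallyReduced_append_familyWord hirr hsym v hv hcancel
  refine ⟨p, familyWord M a, m, familyWord M b, M, a, b, hba, _, rfl,
    hpv.of_infix ⟨[], v ++ wordInv G p, by simp⟩, reduced_familyWord a,
    (hv.of_traceEquiv hirr hsym hvm).of_infix (List.infix_append _ _ _), reduced_familyWord b,
    hM, huv.trans (by simpa using (hvm.append_left p).append_right (wordInv G p)),
    .refl _, .refl _, hcyc, .trans (isConj_iff.mpr ⟨(evalWord I G p)⁻¹, ?_⟩) hconj⟩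
  rw [huv.evalWord_eq, evalWord_append, evalWord_append, evalWord_wordInv]
  group

theorem exists_cyclically_reduced_conjugate_decomposition
    {L : Type} [Finite L] [DecidableEq L]
    (I : L → L → Prop) (G : L → Type) [∀ α, Group (G α)]
    (hirr : ∀ α, ¬ I α α) (hsym : ∀ α β, I α β → I β α)
    (u : List (Letter L G)) (hu : Reduced I G u) :
    ∃ (p r m s : List (Letter L G)) (M : Finset L)
      (a b : (α : L) → α ∈ M → {g : G α // g ≠ 1})
      (hba : ∀ (α : L) (h : α ∈ M), (b α h : G α) * (a α h : G α) ≠ 1)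
      (c : List (Letter L G)),
      c = M.toList.attach.map (fun x =>
        (⟨x.1, ⟨(b x.1 (Finset.mem_toList.mp x.2) : G x.1) *
               (a x.1 (Finset.mem_toList.mp x.2) : G x.1),
               hba x.1 (Finset.mem_toList.mp x.2)⟩⟩ : Letter L G)) ∧
      Reduced I G p ∧ Reduced I G r ∧ Reduced I G m ∧ Reduced I G s ∧
      (∀ α ∈ M, ∀ β ∈ M, α ≠ β → I α β) ∧
      TraceEquiv I G u (p ++ r ++ m ++ s ++ wordInv G p) ∧
      TraceEquiv I G r (M.toList.attach.map (fun x =>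
        (⟨x.1, a x.1 (Finset.mem_toList.mp x.2)⟩ : Letter L G))) ∧
      TraceEquiv I G s (M.toList.attach.map (fun x =>
        (⟨x.1, b x.1 (Finset.mem_toList.mp x.2)⟩ : Letter L G))) ∧
      IsCyclicallyReduced I G (m ++ c) ∧
      IsConj (evalWord I G u) (evalWord I G (m ++ c)) :=
  exists_cyclically_reduced_conjugate_decomposition_general I G hirr hsym u hu
end

section
/- Let C ⊆ L, let G_C be the graph product over the subgraph of (L, I) induced by C, and let ι_C : G_C → G be the canonical homomorphism induced by the inclusions G_γ → G for γ ∈ C. Then for all g, h ∈ G_C: g and h are conjugate in G_C if and only if ι_C(g) and ι_C(h) are conjugate in G. -/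
variable {L : Type} (I : L → L → Prop) (G : L → Type) [∀ α, Group (G α)]

theorem MonoidHom.isConj_map_iff_of_leftInverse {M N : Type*} [Monoid M] [Monoid N]
    {f : M →* N} {r : N →* M} (hrf : Function.LeftInverse r f) {a b : M} :
    IsConj (f a) (f b) ↔ IsConj a b :=
  ⟨fun h => hrf a ▸ hrf b ▸ r.map_isConj h, f.map_isConj⟩

namespace GP

variable {I G}

theorem commute_gpOf {α β : L} (hI : I α β) (g : G α) (h : G β) :
    Commute (gpOf I G α g) (gpOf I G β h) := by
  have hrel : Monoid.CoprodI.of g * Monoid.CoprodI.of h * (Monoid.CoprodI.of g)⁻¹ *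
      (Monoid.CoprodI.of h)⁻¹ ∈ Subgroup.normalClosure (gpRels I G) :=
    Subgroup.subset_normalClosure ⟨α, β, g, h, hI, rfl⟩
  have hone : gpOf I G α g * gpOf I G β h * (gpOf I G α g)⁻¹ * (gpOf I G β h)⁻¹ = 1 :=
    (QuotientGroup.eq_one_iff _).2 hrel
  rwa [mul_inv_eq_one, mul_inv_eq_iff_eq_mul] at hone

def lift {H : Type*} [Group H] (f : ∀ α, G α →* H)
    (hf : ∀ α β, I α β → ∀ (g : G α) (h : G β), Commute (f α g) (f β h)) :
    GP I G →* H :=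
  QuotientGroup.lift _ (Monoid.CoprodI.lift f) <| Subgroup.normalClosure_le_normal <| by
    rintro _ ⟨α, β, g, h, hI, rfl⟩
    simp [(hf α β hI g h).eq]

@[simp]
theorem lift_gpOf {H : Type*} [Group H] (f : ∀ α, G α →* H)
    (hf : ∀ α β, I α β → ∀ (g : G α) (h : G β), Commute (f α g) (f β h)) (α : L) (g : G α) :
    lift f hf (gpOf I G α g) = f α g :=
  Monoid.CoprodI.lift_of f g

theorem hom_ext {H : Type*} [Monoid H] {f f' : GP I G →* H}
    (h : ∀ α, f.comp (gpOf I G α) = f'.comp (gpOf I G α)) : f = f' :=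
  QuotientGroup.monoidHom_ext _ <| Monoid.CoprodI.ext_hom _ _ h

open Classical in
noncomputable def restrict (C : Set L) :
    GP I G →* GP (fun a b : C => I a b) (fun a : C => G a) :=
  lift (fun α => if hα : α ∈ C then gpOf (fun a b : C => I a b) (fun a : C => G a) ⟨α, hα⟩
    else 1) fun α β hI g h => by
    by_cases hα : α ∈ C
    · by_cases hβ : β ∈ C
      · simpa [hα, hβ] using commute_gpOf (I := fun a b : C => I a b) (G := fun a : C => G a)
          (α := ⟨α, hα⟩) (β := ⟨β, hβ⟩) hI g h
      · simp [hβ]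
    · simp [hα]

@[simp]
theorem restrict_gpOf (C : Set L) (γ : C) (g : G γ) :
    restrict C (gpOf I G γ g) = gpOf (fun a b : C => I a b) (fun a : C => G a) γ g := by
  simp [restrict]

theorem restrict_leftInverse {C : Set L}
    {ι : GP (fun a b : C => I a b) (fun a : C => G a) →* GP I G}
    (hι : ∀ (γ : C) (g : G γ), ι (gpOf _ _ γ g) = gpOf I G γ g) :
    Function.LeftInverse (restrict C) ι :=
  DFunLike.congr_fun (f := (restrict C).comp ι) (g := MonoidHom.id _) <|
    hom_ext fun γ => MonoidHom.ext fun g => by simp [hι]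

end GP

theorem conjugacy_in_induced_subgraph_product_general
    {L : Type} (I : L → L → Prop) (G : L → Type) [∀ α, Group (G α)]
    (C : Set L)
    (ιC : GP (fun a b : C => I a b) (fun a : C => G a) →* GP I G)
    (hιC : ∀ (γ : C) (g : G γ),
      ιC (gpOf (fun a b : C => I a b) (fun a : C => G a) γ g) = gpOf I G γ g) :
    ∀ g h : GP (fun a b : C => I a b) (fun a : C => G a),
      IsConj g h ↔ IsConj (ιC g) (ιC h) :=
  fun _ _ => (MonoidHom.isConj_map_iff_of_leftInverse (GP.restrict_leftInverse hιC)).symm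

theorem conjugacy_in_induced_subgraph_product
    {L : Type} [Finite L] (I : L → L → Prop) (G : L → Type) [∀ α, Group (G α)]
    (hirr : ∀ α, ¬ I α α) (hsym : ∀ α β, I α β → I β α)
    (C : Set L)
    (ιC : GP (fun a b : C => I a b) (fun a : C => G a) →* GP I G)
    (hιC : ∀ (γ : C) (g : G γ),
      ιC (gpOf (fun a b : C => I a b) (fun a : C => G a) γ g) = gpOf I G γ g) :
    ∀ g h : GP (fun a b : C => I a b) (fun a : C => G a),
      IsConj g h ↔ IsConj (ιC g) (ιC h) :=
  conjugacy_in_induced_subgraph_product_general I G C ιC hιC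
end
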